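/- arXiv:2407.00385 — 2 statements merged into one kernel-verified Lean document; each statement's English description precedes it below -/
import Mathlib

section
/- Let W̃ and Ŵ be symmetric PSD n×n matrices with rank(W̃) = R < n and rank(Ŵ) = R+1, with λ̃₁ the largest eigenvalue of W̃ and λ̂_{R+1} the smallest nonzero eigenvalue of Ŵ. If either R·λ̃₁ ≤ (R+1)·λ̂_{R+1}, or 0 < ε < λ̃₁·λ̂_{R+1}/(R·λ̃₁ − (R+1)·λ̂_{R+1}), then trace((W̃ + εI)⁻¹) > trace((Ŵ + εI)⁻¹). -/
/-!
In an eigenbasis, `trace (W + εI)⁻¹ = ∑ᵢ 1 / (λᵢ + ε)`. The `R` nonzero eigenvalues of `W̃` are at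
most `λ̃₁` and the other `n - R` vanish, so its trace is at least `R / (λ̃₁ + ε) + (n - R) / ε`; the
`R + 1` nonzero eigenvalues of `Ŵ` are at least `λ̂`, so its trace is at most
`(R + 1) / (λ̂ + ε) + (n - R - 1) / ε`. The two bounds differ by
`1 / ε + R / (λ̃₁ + ε) - (R + 1) / (λ̂ + ε) = (λ̃₁ λ̂ - ε (R λ̃₁ - (R + 1) λ̂)) / (ε (λ̃₁ + ε) (λ̂ + ε))`,
which is positive under either hypothesis on `ε`.
-/

open Matrix Finset

namespace Matrix.IsHermitian

variable {𝕜 ι : Type*} [RCLike 𝕜] [Fintype ι] [DecidableEq ι] {A : Matrix ι ι 𝕜}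

theorem trace_cfc (hA : A.IsHermitian) (f : ℝ → ℝ) :
    (cfc f A).trace = ∑ i, (f (hA.eigenvalues i) : 𝕜) := by
  rw [hA.cfc_eq, IsHermitian.cfc, Unitary.conjStarAlgAut_apply, trace_mul_cycle,
    Unitary.coe_star_mul_self, one_mul, trace_diagonal]
  rfl

theorem trace_inv_add_smul_one (hA : A.IsHermitian) {ε : ℝ}
    (hε : ∀ i, hA.eigenvalues i + ε ≠ 0) :
    (A + ε • (1 : Matrix ι ι 𝕜))⁻¹.trace = ∑ i, (((hA.eigenvalues i + ε)⁻¹ : ℝ) : 𝕜) := by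
  have hspec : ∀ x ∈ spectrum ℝ A, x + ε ≠ 0 := by
    rw [hA.spectrum_real_eq_range_eigenvalues]
    rintro _ ⟨i, rfl⟩
    exact hε i
  have hinv : (A + ε • (1 : Matrix ι ι 𝕜))⁻¹ = cfc (fun x ↦ (x + ε)⁻¹) A := by
    rw [cfc_inv (· + ε) A hspec, cfc_add_const ε (fun x ↦ x) A, cfc_id' ℝ A,
      Algebra.algebraMap_eq_smul_one, nonsing_inv_eq_ringInverse]
  rw [hinv, hA.trace_cfc]

theorem card_eigenvalues_ne_zero (hA : A.IsHermitian) :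
    #{i | hA.eigenvalues i ≠ 0} = A.rank := by
  rw [hA.rank_eq_card_non_zero_eigs, Fintype.card_subtype]

theorem card_eigenvalues_eq_zero_add_rank (hA : A.IsHermitian) :
    #{i | hA.eigenvalues i = 0} + A.rank = Fintype.card ι := by
  rw [← hA.card_eigenvalues_ne_zero, ← card_univ]
  exact card_filter_add_card_filter_not _

end Matrix.IsHermitian

section RegularizedInverseSums

variable {ι : Type*} [Fintype ι] {f : ι → ℝ} {ε : ℝ}

theorem sum_inv_add_eq_sum_ne_zero_add :
    ∑ i, (f i + ε)⁻¹ = ∑ i with f i ≠ 0, (f i + ε)⁻¹ + #{i | f i = 0} / ε := by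
  rw [← sum_filter_add_sum_filter_not univ (fun i ↦ f i ≠ 0), div_eq_mul_inv, ← nsmul_eq_mul,
    ← sum_const]
  congr 1
  refine sum_congr (by simp) fun i hi ↦ ?_
  rw [(mem_filter.mp hi).2, zero_add]

theorem card_div_add_le_sum_inv_add {M : ℝ} (hf : ∀ i, 0 ≤ f i) (hfM : ∀ i, f i ≤ M)
    (hε : 0 < ε) :
    #{i | f i ≠ 0} / (M + ε) + #{i | f i = 0} / ε ≤ ∑ i, (f i + ε)⁻¹ := by
  rw [sum_inv_add_eq_sum_ne_zero_add, add_le_add_iff_right, div_eq_mul_inv, ← nsmul_eq_mul]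
  refine card_nsmul_le_sum _ _ _ fun i _ ↦ ?_
  exact inv_anti₀ (by linarith [hf i]) (by linarith [hfM i])

theorem sum_inv_add_le_card_div_add {m : ℝ} (hfm : ∀ i, f i ≠ 0 → m ≤ f i) (hm : 0 < m + ε) :
    ∑ i, (f i + ε)⁻¹ ≤ #{i | f i ≠ 0} / (m + ε) + #{i | f i = 0} / ε := by
  rw [sum_inv_add_eq_sum_ne_zero_add, add_le_add_iff_right, div_eq_mul_inv, ← nsmul_eq_mul]
  refine sum_le_card_nsmul _ _ _ fun i hi ↦ ?_
  exact inv_anti₀ hm (by linarith [hfm i (mem_filter.mp hi).2])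

end RegularizedInverseSums

theorem add_one_div_add_lt_div_add_add_inv {r M m ε : ℝ} (hr : 0 ≤ r) (hM : 0 ≤ M) (hm : 0 < m)
    (hε : 0 < ε) (h : r * M ≤ (r + 1) * m ∨ ε < M * m / (r * M - (r + 1) * m)) :
    (r + 1) / (m + ε) < r / (M + ε) + ε⁻¹ := by
  have hnum : 0 < M * m - ε * (r * M - (r + 1) * m) := by
    rcases le_or_gt (r * M - (r + 1) * m) 0 with hd | hd
    · rcases hM.eq_or_lt with rfl | hM
      · nlinarith [mul_pos hε (mul_pos (by linarith : 0 < r + 1) hm)]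
      · nlinarith [mul_pos hM hm]
    · have hlt := h.resolve_left (by linarith)
      rw [lt_div_iff₀ hd] at hlt
      linarith
  have hgap : r / (M + ε) + ε⁻¹ - (r + 1) / (m + ε)
      = (M * m - ε * (r * M - (r + 1) * m)) / (ε * (M + ε) * (m + ε)) := by
    field_simp
    ring
  have : 0 < r / (M + ε) + ε⁻¹ - (r + 1) / (m + ε) := by
    rw [hgap]
    positivity
  linarith

namespace Matrix.PosSemidef

variable {ι : Type*} [Fintype ι] [DecidableEq ι] {A : Matrix ι ι ℝ}

theorem trace_inv_add_smul_one (hA : A.PosSemidef) {ε : ℝ} (hε : 0 < ε) :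
    (A + ε • (1 : Matrix ι ι ℝ))⁻¹.trace = ∑ i, (hA.1.eigenvalues i + ε)⁻¹ := by
  simpa only [RCLike.ofReal_real_eq_id, id] using hA.1.trace_inv_add_smul_one
    fun i ↦ (add_pos_of_nonneg_of_pos (hA.eigenvalues_nonneg i) hε).ne'

theorem cast_card_eigenvalues_eq_zero (hA : A.PosSemidef) :
    (#{i | hA.1.eigenvalues i = 0} : ℝ) = Fintype.card ι - A.rank :=
  eq_sub_of_add_eq (mod_cast hA.1.card_eigenvalues_eq_zero_add_rank)

theorem rank_div_add_le_trace_inv_add_smul_one (hA : A.PosSemidef) {M ε : ℝ}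
    (hM : ∀ i, hA.1.eigenvalues i ≤ M) (hε : 0 < ε) :
    A.rank / (M + ε) + (Fintype.card ι - A.rank) / ε ≤ (A + ε • (1 : Matrix ι ι ℝ))⁻¹.trace := by
  have h := card_div_add_le_sum_inv_add hA.eigenvalues_nonneg hM hε
  rwa [hA.1.card_eigenvalues_ne_zero, hA.cast_card_eigenvalues_eq_zero,
    ← hA.trace_inv_add_smul_one hε] at h

theorem trace_inv_add_smul_one_le_rank_div_add (hA : A.PosSemidef) {m ε : ℝ}
    (hm : ∀ i, hA.1.eigenvalues i ≠ 0 → m ≤ hA.1.eigenvalues i) (hmε : 0 < m + ε) (hε : 0 < ε) :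
    (A + ε • (1 : Matrix ι ι ℝ))⁻¹.trace ≤ A.rank / (m + ε) + (Fintype.card ι - A.rank) / ε := by
  have h := sum_inv_add_le_card_div_add hm hmε
  rwa [hA.1.card_eigenvalues_ne_zero, hA.cast_card_eigenvalues_eq_zero,
    ← hA.trace_inv_add_smul_one hε] at h

end Matrix.PosSemidef

theorem stmt4_general {n : ℕ} (Wt Wh : Matrix (Fin n) (Fin n) ℝ)
    (hWt : Wt.PosSemidef) (hWh : Wh.PosSemidef)
    (R : ℕ) (hRt : Wt.rank = R) (hRh : Wh.rank = R + 1)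
    (lamt : ℝ) (hlamt : IsGreatest (Set.range hWt.1.eigenvalues) lamt)
    (lamh : ℝ)
    (hlamh : IsLeast {x | x ∈ Set.range hWh.1.eigenvalues ∧ 0 < x} lamh)
    (ε : ℝ) (hε : 0 < ε)
    (hsmall : (R : ℝ) * lamt ≤ ((R : ℝ) + 1) * lamh ∨
      ε < lamt * lamh / ((R : ℝ) * lamt - ((R : ℝ) + 1) * lamh)) :
    (Wt + ε • (1 : Matrix (Fin n) (Fin n) ℝ))⁻¹.trace
      > (Wh + ε • (1 : Matrix (Fin n) (Fin n) ℝ))⁻¹.trace := by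
  have hlamt_nonneg : 0 ≤ lamt := by
    obtain ⟨i, rfl⟩ := hlamt.1
    exact hWt.eigenvalues_nonneg i
  have hlamh_pos : 0 < lamh := hlamh.1.2
  have hlower := hWt.rank_div_add_le_trace_inv_add_smul_one (fun i ↦ hlamt.2 ⟨i, rfl⟩) hε
  have hupper := hWh.trace_inv_add_smul_one_le_rank_div_add
    (fun i hi ↦ hlamh.2 ⟨⟨i, rfl⟩, (hWh.eigenvalues_nonneg i).lt_of_ne' hi⟩) (by linarith) hε
  rw [hRt, Fintype.card_fin] at hlower
  rw [hRh, Fintype.card_fin, Nat.cast_add_one] at hupper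
  have hgap := add_one_div_add_lt_div_add_add_inv R.cast_nonneg hlamt_nonneg hlamh_pos hε hsmall
  have hsplit : ((n : ℝ) - R) / ε = (n - (R + 1)) / ε + ε⁻¹ := by field_simp; ring
  linarith

/-- Proposition 1: if `rank W̃ = R < n`, `rank Ŵ = R+1`, `λ̃₁` is the top
eigenvalue of `W̃` and `λ̂` the smallest positive eigenvalue of `Ŵ`, then
for `ε` small enough (or unconditionally if `R·λ̃₁ ≤ (R+1)·λ̂`),
`trace (W̃+εI)⁻¹ > trace (Ŵ+εI)⁻¹`. -/
theorem stmt4 {n : ℕ} (Wt Wh : Matrix (Fin n) (Fin n) ℝ)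
    (hWt : Wt.PosSemidef) (hWh : Wh.PosSemidef)
    (R : ℕ) (hRt : Wt.rank = R) (hRn : R < n) (hRh : Wh.rank = R + 1)
    (lamt : ℝ) (hlamt : IsGreatest (Set.range hWt.1.eigenvalues) lamt)
    (hlamtpos : 0 < lamt)
    (lamh : ℝ) (hlamhpos : 0 < lamh)
    (hlamh : IsLeast {x | x ∈ Set.range hWh.1.eigenvalues ∧ 0 < x} lamh)
    (ε : ℝ) (hε : 0 < ε)
    (hsmall : (R : ℝ) * lamt ≤ ((R : ℝ) + 1) * lamh ∨
      ε < lamt * lamh / ((R : ℝ) * lamt - ((R : ℝ) + 1) * lamh)) :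
    (Wt + ε • (1 : Matrix (Fin n) (Fin n) ℝ))⁻¹.trace
      > (Wh + ε • (1 : Matrix (Fin n) (Fin n) ℝ))⁻¹.trace :=
  stmt4_general Wt Wh hWt hWh R hRt hRh lamt hlamt lamh hlamh ε hε hsmall
end

section
/- Fix ε > 0 and PSD n×n matrices M_i for i in a finite set V, and let W = Σ_{i∈V} M_i. The set function E(T) = trace((εI + Σ_{i∈T} M_i)⁻¹) is α-supermodular with α ≥ ε/λ_max(εI + W): for all A ⊆ B ⊆ V and e ∈ V \ B, E(A) − E(A ∪ {e}) ≥ (ε/λ_max(εI + W)) · (E(B) − E(B ∪ {e})). -/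
/-!
Put `X = εI + Σ_{i∈A} M_i`, `Y = εI + Σ_{i∈B} M_i`, `D = M_e` and compare both marginal decreases
along the segments `P_t = X + tD`, `Q_t = Y + tD`, `t ∈ [0, 1]`. There `P_t ≤ Q_t`, `εI ≤ Q_t` and
`P_t ≤ εI + W ≤ λ_max I`, so in the Loewner order `ε Q_t⁻² ≤ Q_t⁻¹ ≤ P_t⁻¹ ≤ λ_max P_t⁻²`.
Since `d/dt tr (C + tD)⁻¹ = -tr ((C + tD)⁻¹ D (C + tD)⁻¹)`, pairing these bounds with `D ≥ 0`
under the trace shows that `λ_max tr P_t⁻¹ - ε tr Q_t⁻¹` is antitone; compare `t = 0` and `t = 1`.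
-/

open Matrix Finset
open scoped MatrixOrder ComplexOrder

namespace Matrix

variable {m 𝕜 : Type*} [RCLike 𝕜]

theorem PosDef.of_le {A B : Matrix m m 𝕜} (hA : A.PosDef) (hAB : A ≤ B) : B.PosDef := by
  simpa using hA.add_posSemidef hAB

variable [Fintype m] [DecidableEq m]

theorem PosDef.inv_anti {A B : Matrix m m 𝕜} (hA : A.PosDef) (hAB : A ≤ B) :
    B⁻¹ ≤ A⁻¹ := by
  have hB := hA.of_le hAB
  have := hA.isUnit.invertible
  have := hB.isUnit.invertible
  -- `B - A` and `A⁻¹ - B⁻¹` are the two Schur complements of `fromBlocks B 1 1 A⁻¹`.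
  have h : (fromBlocks B 1 1ᴴ A⁻¹).PosSemidef :=
    (PosDef.fromBlocks₂₂ B 1 hA.inv).2 (by simpa using le_iff.mp hAB)
  exact le_iff.mpr (by simpa using (PosDef.fromBlocks₁₁ 1 A⁻¹ hB).1 h)

theorem PosSemidef.trace_mul_nonneg {A B : Matrix m m 𝕜} (hA : A.PosSemidef)
    (hB : B.PosSemidef) : 0 ≤ (A * B).trace := by
  obtain ⟨S, rfl⟩ := CStarAlgebra.nonneg_iff_eq_star_mul_self.mp hB.nonneg
  rw [← mul_assoc, trace_mul_cycle]
  exact (hA.mul_mul_conjTranspose_same S).trace_nonneg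

theorem trace_mul_le_trace_mul_of_le {A B D : Matrix m m 𝕜} (hAB : A ≤ B)
    (hD : D.PosSemidef) : (A * D).trace ≤ (B * D).trace := by
  have := (le_iff.mp hAB).trace_mul_nonneg hD
  rwa [Matrix.sub_mul, trace_sub, sub_nonneg] at this

theorem PosDef.smul_inv_mul_inv_le_inv {P : Matrix m m 𝕜} (hP : P.PosDef) {c : ℝ}
    (h : c • 1 ≤ P) : c • (P⁻¹ * P⁻¹) ≤ P⁻¹ := by
  have := hP.inv.isHermitian.isSelfAdjoint.conjugate_le_conjugate h
  rwa [nonsing_inv_mul _ ((isUnit_iff_isUnit_det P).mp hP.isUnit), one_mul, mul_smul_one,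
    smul_mul] at this

theorem PosDef.inv_le_smul_inv_mul_inv {P : Matrix m m 𝕜} (hP : P.PosDef) {c : ℝ}
    (h : P ≤ c • 1) : P⁻¹ ≤ c • (P⁻¹ * P⁻¹) := by
  have := hP.inv.isHermitian.isSelfAdjoint.conjugate_le_conjugate h
  rwa [nonsing_inv_mul _ ((isUnit_iff_isUnit_det P).mp hP.isUnit), one_mul, mul_smul_one,
    smul_mul] at this

theorem IsHermitian.le_smul_one_of_eigenvalues_le {H : Matrix m m 𝕜} (hH : H.IsHermitian)
    {c : ℝ} (h : ∀ i, hH.eigenvalues i ≤ c) : H ≤ c • 1 := by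
  rw [← Algebra.algebraMap_eq_smul_one]
  refine le_algebraMap_of_spectrum_le ?_ hH.isSelfAdjoint
  rw [hH.spectrum_real_eq_range_eigenvalues]
  rintro _ ⟨i, rfl⟩
  exact h i

section Derivative

-- Any algebra norm will do: it only serves to differentiate `Ring.inverse`.
attribute [local instance] Matrix.linftyOpNormedAddCommGroup Matrix.linftyOpNormedSpace
  Matrix.linftyOpNormedRing Matrix.linftyOpNormedAlgebra

theorem hasDerivAt_trace_inv_add_smul {X D : Matrix m m ℝ} {t : ℝ} (h : IsUnit (X + t • D)) :
    HasDerivAt (fun s : ℝ => (X + s • D)⁻¹.trace)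
      (-((X + t • D)⁻¹ * D * (X + t • D)⁻¹).trace) t := by
  obtain ⟨u, hu⟩ := h
  have hpath := ((hasDerivAt_id t).smul_const D).const_add X
  have hinv := (hu ▸ hasFDerivAt_ringInverse (𝕜 := ℝ) u).comp_hasDerivAt t hpath
  have htr := (traceLinearMap m ℝ ℝ).toContinuousLinearMap.hasFDerivAt.comp_hasDerivAt t hinv
  convert htr using 1 <;> try rfl
  · funext s
    simp [nonsing_inv_eq_ringInverse]
  · simp only [← hu, coe_units_inv, _root_.neg_apply, ContinuousLinearMap.mulLeftRight_apply,
      one_smul]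
    exact (trace_neg _).symm

end Derivative

theorem mul_trace_inv_mul_inv_le {P Q D : Matrix m m ℝ} {ε L : ℝ} (hP : P.PosDef)
    (hPQ : P ≤ Q) (hPL : P ≤ L • 1) (hεQ : ε • 1 ≤ Q) (hD : D.PosSemidef) :
    ε * (Q⁻¹ * D * Q⁻¹).trace ≤ L * (P⁻¹ * D * P⁻¹).trace := by
  have hQ := hP.of_le hPQ
  calc ε * (Q⁻¹ * D * Q⁻¹).trace = (ε • (Q⁻¹ * Q⁻¹) * D).trace := by
        rw [smul_mul, trace_smul, smul_eq_mul, trace_mul_cycle]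
    _ ≤ (Q⁻¹ * D).trace := trace_mul_le_trace_mul_of_le (hQ.smul_inv_mul_inv_le_inv hεQ) hD
    _ ≤ (P⁻¹ * D).trace := trace_mul_le_trace_mul_of_le (hP.inv_anti hPQ) hD
    _ ≤ (L • (P⁻¹ * P⁻¹) * D).trace :=
        trace_mul_le_trace_mul_of_le (hP.inv_le_smul_inv_mul_inv hPL) hD
    _ = L * (P⁻¹ * D * P⁻¹).trace := by
        rw [smul_mul, trace_smul, smul_eq_mul, trace_mul_cycle P⁻¹ D]

theorem mul_trace_inv_sub_trace_inv_add_le {X Y D : Matrix m m ℝ} {ε L : ℝ} (hX : X.PosDef)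
    (hXY : X ≤ Y) (hD : D.PosSemidef) (hXD : X + D ≤ L • 1) (hεY : ε • 1 ≤ Y) :
    ε * (Y⁻¹.trace - (Y + D)⁻¹.trace) ≤ L * (X⁻¹.trace - (X + D)⁻¹.trace) := by
  set g : ℝ → ℝ := fun t => L * (X + t • D)⁻¹.trace - ε * (Y + t • D)⁻¹.trace
  have htD {t : ℝ} (ht : t ∈ Set.Icc (0 : ℝ) 1) : 0 ≤ t • D := (hD.smul ht.1).nonneg
  have hXt {t : ℝ} (ht : t ∈ Set.Icc (0 : ℝ) 1) : (X + t • D).PosDef :=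
    hX.add_posSemidef (htD ht).posSemidef
  have hYt {t : ℝ} (ht : t ∈ Set.Icc (0 : ℝ) 1) : (Y + t • D).PosDef :=
    (hXt ht).of_le (add_le_add_left hXY _)
  have hXtL {t : ℝ} (ht : t ∈ Set.Icc (0 : ℝ) 1) : X + t • D ≤ L • 1 := by
    refine le_trans ?_ hXD
    rw [le_iff, add_sub_add_left_eq_sub, ← one_smul ℝ D, smul_smul, mul_one, ← sub_smul]
    exact hD.smul (sub_nonneg.2 ht.2)
  have hg {t : ℝ} (ht : t ∈ Set.Icc (0 : ℝ) 1) : HasDerivAt g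
      (L * -((X + t • D)⁻¹ * D * (X + t • D)⁻¹).trace
        - ε * -((Y + t • D)⁻¹ * D * (Y + t • D)⁻¹).trace) t :=
    ((hasDerivAt_trace_inv_add_smul (hXt ht).isUnit).const_mul L).sub
      ((hasDerivAt_trace_inv_add_smul (hYt ht).isUnit).const_mul ε)
  have hanti : AntitoneOn g (Set.Icc 0 1) := by
    refine antitoneOn_of_hasDerivWithinAt_nonpos (convex_Icc 0 1)
      (fun t ht => (hg ht).continuousAt.continuousWithinAt)
      (fun t ht => (hg (interior_subset ht)).hasDerivWithinAt) fun t ht => ?_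
    have ht := interior_subset ht
    have := mul_trace_inv_mul_inv_le (hXt ht) (add_le_add_left hXY _) (hXtL ht)
      (hεY.trans (le_add_of_nonneg_right (htD ht))) hD
    linarith
  have := hanti (Set.left_mem_Icc.2 zero_le_one) (Set.right_mem_Icc.2 zero_le_one) zero_le_one
  simp only [g, zero_smul, add_zero, one_smul] at this
  linarith

end Matrix

/-- Proposition 2 (supermodularity): `E(T) = trace((εI + Σ_{i∈T} M_i)⁻¹)` is
`α`-supermodular with `α ≥ ε / λ_max(εI + W)`, `W = Σ_{i∈V} M_i`. -/
theorem stmt6 {n : ℕ} {ι : Type*} [Fintype ι] [DecidableEq ι]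
    (M : ι → Matrix (Fin n) (Fin n) ℝ) (hM : ∀ i, (M i).PosSemidef)
    (ε : ℝ) (hε : 0 < ε)
    (hH : (ε • (1 : Matrix (Fin n) (Fin n) ℝ) + ∑ i, M i).IsHermitian)
    (lmax : ℝ) (hlmax : IsGreatest (Set.range hH.eigenvalues) lmax)
    (A B : Finset ι) (hAB : A ⊆ B) (e : ι) (he : e ∉ B) :
    (ε • (1 : Matrix (Fin n) (Fin n) ℝ) + ∑ i ∈ A, M i)⁻¹.trace
        - (ε • (1 : Matrix (Fin n) (Fin n) ℝ) + ∑ i ∈ insert e A, M i)⁻¹.trace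
      ≥ (ε / lmax) *
        ((ε • (1 : Matrix (Fin n) (Fin n) ℝ) + ∑ i ∈ B, M i)⁻¹.trace
          - (ε • (1 : Matrix (Fin n) (Fin n) ℝ) + ∑ i ∈ insert e B, M i)⁻¹.trace) := by
  have heA : e ∉ A := fun h => he (hAB h)
  have hsum_mono {s t : Finset ι} (hst : s ⊆ t) : ∑ i ∈ s, M i ≤ ∑ i ∈ t, M i :=
    sum_le_sum_of_subset_of_nonneg hst fun i _ _ => (hM i).nonneg
  have hins {s : Finset ι} (hs : e ∉ s) : ε • 1 + ∑ i ∈ insert e s, M i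
      = ε • (1 : Matrix (Fin n) (Fin n) ℝ) + ∑ i ∈ s, M i + M e := by
    rw [sum_insert hs, add_comm (M e), add_assoc]
  have hεI : (ε • (1 : Matrix (Fin n) (Fin n) ℝ)).PosDef := PosDef.one.smul hε
  have hW : ε • (1 : Matrix (Fin n) (Fin n) ℝ) + ∑ i, M i ≤ lmax • 1 :=
    hH.le_smul_one_of_eigenvalues_le fun j => hlmax.2 ⟨j, rfl⟩
  have hlmax_pos : 0 < lmax := by
    obtain ⟨i, rfl⟩ := hlmax.1
    exact (hεI.add_posSemidef (posSemidef_sum _ fun i _ => hM i)).eigenvalues_pos i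
  have key := mul_trace_inv_sub_trace_inv_add_le (D := M e)
    (hεI.add_posSemidef (posSemidef_sum A fun i _ => hM i))
    (add_le_add_right (hsum_mono hAB) _) (hM e)
    (hins heA ▸ (add_le_add_right (hsum_mono (subset_univ _)) _).trans hW)
    (le_add_of_nonneg_right (sum_nonneg fun i _ => (hM i).nonneg) :
      ε • 1 ≤ ε • 1 + ∑ i ∈ B, M i)
  rw [hins heA, hins he, ge_iff_le, div_mul_eq_mul_div, div_le_iff₀ hlmax_pos]
  linarith
end
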